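/- arXiv:1607.04552 — 6 statements merged into one kernel-verified Lean document; each statement's English description precedes it below -/
import Mathlib

section
/- Let Q be a complete sequence and let i be an index with 1 ≤ i < N such that D_Q(i) < D_Q(i+1). Let Q* be the complete sequence obtained from Q by swapping the queries at positions i and i+1. Then T(Q*) < T(Q). -/
/-- The set of scenes: subsets of `Fin n` with at least `k` elements. -/
def scenes (n k : ℕ) : Finset (Finset (Fin n)) :=
  Finset.univ.filter fun s => k ≤ s.card

/-- A complete sequence: a list of queries containing every `k`-element
subset of `Fin n` exactly once. -/
def CompleteSeq (n k : ℕ) (Q : List (Finset (Fin n))) : Prop :=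
  Q.Nodup ∧ ∀ q : Finset (Fin n), q ∈ Q ↔ q.card = k

/-- `tau n Q s` is the least (1-based) index `i` such that `q_i ⊆ s`. -/
def tau (n : ℕ) (Q : List (Finset (Fin n))) (s : Finset (Fin n)) : ℕ :=
  Q.findIdx (fun q => decide (q ⊆ s)) + 1

/-- The expected time to discovery `T(Q) = (1/|S|) Σ_{s∈S} τ(Q,s)`. -/
def T (n k : ℕ) (Q : List (Finset (Fin n))) : ℚ :=
  ((scenes n k).card : ℚ)⁻¹ * ∑ s ∈ scenes n k, (tau n Q s : ℚ)

/-- `D n k Q i`: the number of scenes discovered by the query at (1-based)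
position `i` of `Q` but not by any earlier query. -/
def D (n k : ℕ) (Q : List (Finset (Fin n))) (i : ℕ) : ℕ :=
  ((scenes n k).filter fun s =>
    Q.getD (i - 1) ∅ ⊆ s ∧ ∀ j < i - 1, ¬ Q.getD j ∅ ⊆ s).card

/-- The list obtained from `Q` by swapping the queries at (1-based)
positions `i` and `i+1`. -/
def swapAdj (n : ℕ) (Q : List (Finset (Fin n))) (i : ℕ) : List (Finset (Fin n)) :=
  (Q.set (i - 1) (Q.getD i ∅)).set i (Q.getD (i - 1) ∅)

/-- If `D_Q(i) < D_Q(i+1)`, swapping the queries at positions `i` and `i+1`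
strictly decreases the expected time to discovery. -/
theorem T_swap_lt (n k : ℕ) (hk1 : 1 ≤ k) (hkn : k ≤ n)
    (Q : List (Finset (Fin n))) (hQ : CompleteSeq n k Q)
    (i : ℕ) (hi1 : 1 ≤ i) (hiN : i < Nat.choose n k)
    (hD : D n k Q i < D n k Q (i + 1)) :
    T n k (swapAdj n Q i) < T n k Q := by
  obtain ⟨hnd, hmemQ⟩ := hQ
  obtain ⟨i0, rfl⟩ : ∃ i0, i = i0 + 1 := ⟨i - 1, (Nat.succ_pred_eq_of_pos hi1).symm⟩
  -- length of Q
  have hlen : Q.length = Nat.choose n k := by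
    have h1 : Q.toFinset = Finset.powersetCard k Finset.univ := by
      ext q
      simp [List.mem_toFinset, hmemQ, Finset.mem_powersetCard_univ]
    have h2 : Q.toFinset.card = Q.length := List.toFinset_card_of_nodup hnd
    rw [h1, Finset.card_powersetCard, Finset.card_univ, Fintype.card_fin] at h2
    omega
  have hi0 : i0 < Q.length := by omega
  have hi1' : i0 + 1 < Q.length := by omega
  set a : Finset (Fin n) := Q.getD i0 ∅ with ha
  set b : Finset (Fin n) := Q.getD (i0 + 1) ∅ with hb
  have haQ : Q[i0]'hi0 = a := (List.getD_eq_getElem Q ∅ hi0).symm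
  have hbQ : Q[i0 + 1]'hi1' = b := (List.getD_eq_getElem Q ∅ hi1').symm
  set Q' : List (Finset (Fin n)) := (Q.set i0 b).set (i0 + 1) a with hQ'
  have hswap : swapAdj n Q (i0 + 1) = Q' := by
    simp only [swapAdj, Nat.add_sub_cancel, hQ', ha, hb]
  have hlen' : Q'.length = Q.length := by simp [hQ']
  have hget' : ∀ j (hj : j < Q.length),
      Q'[j]'(by omega) = if i0 + 1 = j then a else if i0 = j then b else Q[j]'hj := by
    intro j hj
    simp [hQ', List.getElem_set]
  -- the two predicates
  set PA : Finset (Fin n) → Prop :=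
    fun s => Q.findIdx (fun q => decide (q ⊆ s)) = i0 ∧ ¬ b ⊆ s with hPA
  set PB : Finset (Fin n) → Prop :=
    fun s => Q.findIdx (fun q => decide (q ⊆ s)) = i0 + 1 with hPB
  -- every scene is discovered by some query
  have hex : ∀ s ∈ scenes n k, Q.findIdx (fun q => decide (q ⊆ s)) < Q.length := by
    intro s hs
    have hsk : k ≤ s.card := by simpa [scenes] using hs
    obtain ⟨t, hts, htk⟩ := Finset.exists_subset_card_eq hsk
    exact List.findIdx_lt_length_of_exists ⟨t, (hmemQ t).mpr htk, by simpa using hts⟩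
  -- pointwise change of tau
  have key : ∀ s ∈ scenes n k, (tau n Q' s : ℚ) =
      (tau n Q s : ℚ) + ((if PA s then (1:ℚ) else 0) - (if PB s then (1:ℚ) else 0)) := by
    intro s hs
    set m := Q.findIdx (fun q => decide (q ⊆ s)) with hm
    have hmlt : m < Q.length := hex s hs
    have hpm : Q[m]'hmlt ⊆ s := by
      simpa using (List.findIdx_getElem (w := hmlt))
    have hplt : ∀ j (hj : j < m), ¬ Q[j]'(by omega) ⊆ s := by
      intro j hj
      simpa using List.not_of_lt_findIdx (xs := Q) (p := fun q => decide (q ⊆ s)) hj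
    have htau' : tau n Q' s = Q'.findIdx (fun q => decide (q ⊆ s)) + 1 := rfl
    have htau : tau n Q s = m + 1 := rfl
    rcases lt_or_ge m i0 with hcase | hcase
    · -- first hit strictly before i0 : nothing changes
      have hf' : Q'.findIdx (fun q => decide (q ⊆ s)) = m := by
        rw [List.findIdx_eq (by omega : m < Q'.length)]
        constructor
        · rw [hget' m hmlt, if_neg (by omega), if_neg (by omega)]
          simpa using hpm
        · intro j hj
          rw [hget' j (by omega), if_neg (by omega), if_neg (by omega)]
          simpa using hplt j hj
      have h1 : ¬ PA s := by simp [hPA, ← hm]; omega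
      have h2 : ¬ PB s := by simp [hPB, ← hm]; omega
      rw [htau', htau, hf', if_neg h1, if_neg h2]; ring
    rcases eq_or_lt_of_le hcase with hcase2 | hcase2
    · -- m = i0
      have has : a ⊆ s := by rw [← haQ]; exact hcase2 ▸ hpm
      by_cases hbs : b ⊆ s
      · -- both a and b work: findIdx unchanged
        have hf' : Q'.findIdx (fun q => decide (q ⊆ s)) = i0 := by
          rw [List.findIdx_eq (by omega : i0 < Q'.length)]
          constructor
          · rw [hget' i0 hi0, if_neg (by omega), if_pos rfl]
            simpa using hbs
          · intro j hj
            rw [hget' j (by omega), if_neg (by omega), if_neg (by omega)]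
            simpa using hplt j (by omega)
        have h1 : ¬ PA s := by simp [hPA, hbs]
        have h2 : ¬ PB s := by simp [hPB, ← hm]; omega
        rw [htau', htau, hf', ← hcase2, if_neg h1, if_neg h2]; ring
      · -- a works, b doesn't: tau increases by one
        have hf' : Q'.findIdx (fun q => decide (q ⊆ s)) = i0 + 1 := by
          rw [List.findIdx_eq (by omega : i0 + 1 < Q'.length)]
          constructor
          · rw [hget' (i0 + 1) hi1', if_pos rfl]
            simpa using has
          · intro j hj
            rw [hget' j (by omega), if_neg (by omega)]
            rcases eq_or_lt_of_le (Nat.lt_succ_iff.mp hj) with hji | hji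
            · rw [if_pos hji.symm]; simpa using hbs
            · rw [if_neg (by omega)]
              simpa using hplt j (by omega)
        have h1 : PA s := by exact ⟨by omega, hbs⟩
        have h2 : ¬ PB s := by simp [hPB, ← hm]; omega
        rw [htau', htau, hf', ← hcase2, if_pos h1, if_neg h2]
        push_cast; ring
    rcases eq_or_lt_of_le (Nat.succ_le_of_lt hcase2) with hcase3 | hcase3
    · -- m = i0 + 1 : tau decreases by one
      have hbs : b ⊆ s := by
        rw [← hbQ]
        have : Q[i0 + 1]'hi1' = Q[m]'hmlt := by congr 1
        rw [this]; exact hpm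
      have hf' : Q'.findIdx (fun q => decide (q ⊆ s)) = i0 := by
        rw [List.findIdx_eq (by omega : i0 < Q'.length)]
        constructor
        · rw [hget' i0 hi0, if_neg (by omega), if_pos rfl]
          simpa using hbs
        · intro j hj
          rw [hget' j (by omega), if_neg (by omega), if_neg (by omega)]
          simpa using hplt j (by omega)
      have h1 : ¬ PA s := by simp [hPA, ← hm]; omega
      have h2 : PB s := by simpa [hPB, ← hm] using hcase3.symm
      rw [htau', htau, hf', ← hcase3, if_neg h1, if_pos h2]
      push_cast; ring
    · -- m > i0 + 1 : nothing changes
      have hf' : Q'.findIdx (fun q => decide (q ⊆ s)) = m := by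
        rw [List.findIdx_eq (by omega : m < Q'.length)]
        constructor
        · rw [hget' m hmlt, if_neg (by omega), if_neg (by omega)]
          simpa using hpm
        · intro j hj
          rw [hget' j (by omega)]
          by_cases hj1 : i0 + 1 = j
          · rw [if_pos hj1, ← haQ]
            simpa using hplt i0 (by omega)
          by_cases hj0 : i0 = j
          · rw [if_neg hj1, if_pos hj0, ← hbQ]
            simpa using hplt (i0 + 1) (by omega)
          · rw [if_neg hj1, if_neg hj0]
            simpa using hplt j hj
      have h1 : ¬ PA s := by simp [hPA, ← hm]; omega
      have h2 : ¬ PB s := by simp [hPB, ← hm]; omega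
      rw [htau', htau, hf', if_neg h1, if_neg h2]; ring
  -- the sum identity
  have hsum : ∑ s ∈ scenes n k, (tau n Q' s : ℚ) =
      ∑ s ∈ scenes n k, (tau n Q s : ℚ) +
        ((((scenes n k).filter PA).card : ℚ) - (((scenes n k).filter PB).card : ℚ)) := by
    rw [Finset.sum_congr rfl key, Finset.sum_add_distrib, Finset.sum_sub_distrib,
      Finset.sum_boole, Finset.sum_boole]
  -- card of PA-set is at most D (i0+1)
  have hA : ((scenes n k).filter PA).card ≤ D n k Q (i0 + 1) := by
    apply Finset.card_le_card
    intro s hs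
    rw [Finset.mem_filter] at hs ⊢
    obtain ⟨hs1, hfs, _⟩ := hs
    refine ⟨hs1, ?_, ?_⟩
    · obtain ⟨h1, _⟩ := (List.findIdx_eq hi0).mp hfs
      simp only [Nat.add_sub_cancel]
      rw [List.getD_eq_getElem Q ∅ hi0]
      simpa using h1
    · intro j hj
      simp only [Nat.add_sub_cancel] at hj
      obtain ⟨_, h2⟩ := (List.findIdx_eq hi0).mp hfs
      rw [List.getD_eq_getElem Q ∅ (by omega)]
      simpa using h2 j hj
  -- card of PB-set equals D (i0+2)
  have hB : ((scenes n k).filter PB).card = D n k Q (i0 + 1 + 1) := by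
    unfold D
    congr 1
    apply Finset.filter_congr
    intro s hs
    simp only [Nat.add_sub_cancel, hPB]
    rw [List.findIdx_eq hi1']
    constructor
    · rintro ⟨h1, h2⟩
      refine ⟨by rw [List.getD_eq_getElem Q ∅ hi1']; simpa using h1, ?_⟩
      intro j hj
      rw [List.getD_eq_getElem Q ∅ (by omega)]
      simpa using h2 j hj
    · rintro ⟨h1, h2⟩
      refine ⟨by rw [List.getD_eq_getElem Q ∅ hi1'] at h1; simpa using h1, ?_⟩
      intro j hj
      have := h2 j hj
      rw [List.getD_eq_getElem Q ∅ (by omega)] at this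
      simpa using this
  -- scenes is nonempty
  have hSpos : 0 < ((scenes n k).card : ℚ) := by
    have : (Finset.univ : Finset (Fin n)) ∈ scenes n k := by
      simp [scenes, Finset.card_univ]; omega
    have := Finset.card_pos.mpr ⟨_, this⟩
    exact_mod_cast this
  -- conclude
  rw [hswap]
  unfold T
  apply mul_lt_mul_of_pos_left _ (inv_pos.mpr hSpos)
  rw [hsum]
  have hlt : (((scenes n k).filter PA).card : ℚ) < (((scenes n k).filter PB).card : ℚ) := by
    have : ((scenes n k).filter PA).card < ((scenes n k).filter PB).card := by
      rw [hB]; omega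
    exact_mod_cast this
  linarith
end

section
/- If a complete sequence Q minimizes T among all complete sequences (that is, T(Q) ≤ T(Q') for every complete sequence Q'), then the values D_Q(i) are monotonically decreasing in i: for all indices i with 1 ≤ i < N, D_Q(i) ≥ D_Q(i+1). -/
/-!
Exchange argument. Swapping two adjacent queries `a, b` (preceded by `L`) changes the discovery
time only of scenes that `L` misses and exactly one of `a, b` discovers: those found by `a` alone
are found one step later, those found by `b` alone one step earlier. Optimality of `Q` therefore
forces `#(found by b alone) ≤ #(found by a alone)`, and the left side is `D_Q(i+1)` while the right
side is at most `D_Q(i)`.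
-/

open Finset

theorem List.exists_eq_append_cons_cons {α : Type*} {l : List α} {p : ℕ}
    (h : p + 1 < l.length) : ∃ L a b R, l = L ++ a :: b :: R ∧ L.length = p := by
  refine ⟨l.take p, l[p], l[p + 1], l.drop (p + 2), ?_, by simp; omega⟩
  rw [List.getElem_cons_drop, List.getElem_cons_drop, List.take_append_drop]

theorem List.findIdx_append_swap_add {α : Type*} (p : α → Prop) [DecidablePred p]
    (L R : List α) (a b : α) :
    (L ++ b :: a :: R).findIdx (p ·) + (if (∀ x ∈ L, ¬ p x) ∧ ¬ p a ∧ p b then 1 else 0) =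
      (L ++ a :: b :: R).findIdx (p ·) + (if (∀ x ∈ L, ¬ p x) ∧ p a ∧ ¬ p b then 1 else 0) := by
  rw [List.findIdx_append, List.findIdx_append]
  by_cases hL : ∀ x ∈ L, ¬ p x
  · rw [List.findIdx_eq_length.mpr (by simpa using hL)]
    by_cases ha : p a <;> by_cases hb : p b <;>
      simp [List.findIdx_cons, ha, hb, eq_true hL] <;> omega
  · have hlt : L.findIdx (p ·) < L.length := List.findIdx_lt_length.mpr (by simpa using hL)
    simp [hlt, hL]

section

variable {n : ℕ}

theorem CompleteSeq.length_eq {k : ℕ} {Q : List (Finset (Fin n))} (hQ : CompleteSeq n k Q) :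
    Q.length = n.choose k := by
  have hset : Q.toFinset = powersetCard k univ := by
    ext q
    simp [mem_powersetCard, hQ.2 q]
  rw [← List.toFinset_card_of_nodup hQ.1, hset, card_powersetCard, card_univ, Fintype.card_fin]

theorem CompleteSeq.of_perm {k : ℕ} {Q Q' : List (Finset (Fin n))} (hQ : CompleteSeq n k Q)
    (h : Q.Perm Q') : CompleteSeq n k Q' :=
  ⟨h.nodup_iff.mp hQ.1, fun q => h.mem_iff.symm.trans (hQ.2 q)⟩

theorem tau_append_swap_add (L R : List (Finset (Fin n))) (a b s : Finset (Fin n)) :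
    tau n (L ++ b :: a :: R) s + (if (∀ x ∈ L, ¬ x ⊆ s) ∧ ¬ a ⊆ s ∧ b ⊆ s then 1 else 0) =
      tau n (L ++ a :: b :: R) s + (if (∀ x ∈ L, ¬ x ⊆ s) ∧ a ⊆ s ∧ ¬ b ⊆ s then 1 else 0) := by
  have := List.findIdx_append_swap_add (· ⊆ s) L R a b
  rw [tau, tau, add_right_comm, add_right_comm _ 1]
  -- the two sides decide `∀ x ∈ L, ¬ x ⊆ s` by different (but equal) instances
  convert congrArg (· + 1) this

theorem card_filter_le_of_sum_tau_le (S : Finset (Finset (Fin n)))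
    (L R : List (Finset (Fin n))) (a b : Finset (Fin n))
    (h : ∑ s ∈ S, tau n (L ++ a :: b :: R) s ≤ ∑ s ∈ S, tau n (L ++ b :: a :: R) s) :
    #{s ∈ S | (∀ x ∈ L, ¬ x ⊆ s) ∧ ¬ a ⊆ s ∧ b ⊆ s} ≤
      #{s ∈ S | (∀ x ∈ L, ¬ x ⊆ s) ∧ a ⊆ s ∧ ¬ b ⊆ s} := by
  have hsum := sum_congr rfl fun s (_ : s ∈ S) => tau_append_swap_add L R a b s
  rw [sum_add_distrib, sum_add_distrib, ← card_filter, ← card_filter] at hsum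
  omega

theorem sum_tau_le_of_T_le {k : ℕ} {Q Q' : List (Finset (Fin n))} (h : T n k Q ≤ T n k Q') :
    ∑ s ∈ scenes n k, tau n Q s ≤ ∑ s ∈ scenes n k, tau n Q' s := by
  rcases (scenes n k).eq_empty_or_nonempty with hS | hS
  · simp [hS]
  · have hpos : (0 : ℚ) < (#(scenes n k) : ℚ)⁻¹ := by simpa using hS
    exact_mod_cast (mul_le_mul_iff_right₀ hpos).mp h

theorem D_append_cons (k : ℕ) (L R : List (Finset (Fin n))) (q : Finset (Fin n)) :
    D n k (L ++ q :: R) (L.length + 1) = #{s ∈ scenes n k | (∀ x ∈ L, ¬ x ⊆ s) ∧ q ⊆ s} := by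
  rw [D, Nat.add_sub_cancel]
  congr 1
  refine filter_congr fun s _ => ?_
  rw [List.getD_append_right _ _ _ _ le_rfl, Nat.sub_self, List.getD_cons_zero, and_comm,
    List.forall_mem_iff_getElem]
  refine and_congr (forall₂_congr fun j hj => ?_) Iff.rfl
  rw [List.getD_append _ _ _ _ hj, List.getD_eq_getElem _ _ hj]

theorem D_append_cons_cons (k : ℕ) (L R : List (Finset (Fin n))) (a b : Finset (Fin n)) :
    D n k (L ++ a :: b :: R) (L.length + 1 + 1) =
      #{s ∈ scenes n k | (∀ x ∈ L, ¬ x ⊆ s) ∧ ¬ a ⊆ s ∧ b ⊆ s} := by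
  rw [show L ++ a :: b :: R = L ++ [a] ++ b :: R by simp,
    show L.length + 1 + 1 = (L ++ [a]).length + 1 by simp, D_append_cons]
  simp only [List.forall_mem_append, List.forall_mem_singleton, and_assoc]

end

theorem monotonicity_of_optimal_general (n k : ℕ)
    (Q : List (Finset (Fin n))) (hQ : CompleteSeq n k Q)
    (hmin : ∀ Q' : List (Finset (Fin n)), CompleteSeq n k Q' → T n k Q ≤ T n k Q') :
    ∀ i : ℕ, 1 ≤ i → i < Nat.choose n k → D n k Q (i + 1) ≤ D n k Q i := by
  intro i hi hiN
  obtain ⟨p, rfl⟩ : ∃ p, i = p + 1 := ⟨i - 1, by omega⟩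
  obtain ⟨L, a, b, R, rfl, rfl⟩ := List.exists_eq_append_cons_cons (hQ.length_eq ▸ hiN)
  have hswap : CompleteSeq n k (L ++ b :: a :: R) :=
    hQ.of_perm ((List.Perm.swap b a R).append_left L)
  rw [D_append_cons_cons, D_append_cons]
  calc _ ≤ #{s ∈ scenes n k | (∀ x ∈ L, ¬ x ⊆ s) ∧ a ⊆ s ∧ ¬ b ⊆ s} :=
        card_filter_le_of_sum_tau_le _ L R a b (sum_tau_le_of_T_le (hmin _ hswap))
    _ ≤ _ := card_le_card (monotone_filter_right _ fun _ _ hs => ⟨hs.1, hs.2.1⟩)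

/-- If a complete sequence `Q` minimizes `T` among all complete sequences,
then `D_Q(i)` is monotonically decreasing in `i`. -/
theorem monotonicity_of_optimal (n k : ℕ) (hk1 : 1 ≤ k) (hkn : k ≤ n)
    (Q : List (Finset (Fin n))) (hQ : CompleteSeq n k Q)
    (hmin : ∀ Q' : List (Finset (Fin n)), CompleteSeq n k Q' → T n k Q ≤ T n k Q') :
    ∀ i : ℕ, 1 ≤ i → i < Nat.choose n k → D n k Q (i + 1) ≤ D n k Q i :=
  monotonicity_of_optimal_general n k Q hQ hmin
end

section
/- Fix a scene s with |s| = t and set m = C(t,k), N = C(n,k). For every index i with 1 ≤ i ≤ N − m + 1, the number of complete sequences Q with τ(Q,s) = i equals m · (N − i)! · (N − m)!/(N − m − i + 1)! (that is, m · (N−i)! times the descending product (N−m)(N−m−1)⋯(N−m−i+2)); and for i > N − m + 1 this number is 0. Equivalently, the fraction of the N! complete sequences with τ(Q,s) = i equals (m/(N−i+1)) · ∏_{j=1}^{i−1} (1 − m/(N−j+1)). -/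
/-! A complete sequence is an arrangement of the `N` queries, and `τ(Q,s) = i` says that its
first `i - 1` queries lie among the `N - m` queries not contained in `s` while the `i`-th lies
among the `m` contained in `s`. Removing the first query of an arrangement gives a recursion in
`i`, whose solution is `m · (N - m)(N - m - 1)⋯(N - m - i + 2) · (N - i)!`; dividing by `N!`
turns the falling factorials into the product of the conditional probabilities
`1 - m/(N - j + 1)`. -/

namespace Finset

variable {α : Type*} [DecidableEq α]

noncomputable def arrangements (U : Finset α) : Finset (List α) :=
  U.toList.permutations.toFinset

theorem mem_arrangements {U : Finset α} {L : List α} :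
    L ∈ arrangements U ↔ L.Nodup ∧ ∀ x, x ∈ L ↔ x ∈ U := by
  rw [arrangements, List.mem_toFinset, List.mem_permutations]
  constructor
  · intro h
    exact ⟨h.nodup_iff.2 U.nodup_toList, fun x => by rw [h.mem_iff, mem_toList]⟩
  · rintro ⟨hL, hmem⟩
    exact (List.perm_ext_iff_of_nodup hL U.nodup_toList).2 fun x => by rw [hmem, mem_toList]

theorem card_arrangements (U : Finset α) : #(arrangements U) = (#U).factorial := by
  rw [arrangements, List.toFinset_card_of_nodup (List.nodup_permutations _ U.nodup_toList),
    List.length_permutations, length_toList]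

theorem nil_notMem_arrangements {U : Finset α} (hU : U.Nonempty) : [] ∉ arrangements U := by
  obtain ⟨a, ha⟩ := hU
  simpa [mem_arrangements] using ⟨a, ha⟩

theorem cons_mem_arrangements {U : Finset α} {a : α} {L : List α} :
    a :: L ∈ arrangements U ↔ a ∈ U ∧ L ∈ arrangements (U.erase a) := by
  simp only [mem_arrangements, List.nodup_cons, List.mem_cons, mem_erase]
  constructor
  · rintro ⟨⟨haL, hL⟩, hmem⟩
    refine ⟨(hmem a).1 (Or.inl rfl), hL, fun x => ⟨fun hx => ?_, fun ⟨hxa, hxU⟩ => ?_⟩⟩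
    · exact ⟨fun hxa => haL (hxa ▸ hx), (hmem x).1 (Or.inr hx)⟩
    · exact ((hmem x).2 hxU).resolve_left hxa
  · rintro ⟨haU, hL, hmem⟩
    refine ⟨⟨fun haL => ((hmem a).1 haL).1 rfl, hL⟩, fun x => ⟨?_, fun hxU => ?_⟩⟩
    · rintro (rfl | hx)
      exacts [haU, ((hmem x).1 hx).2]
    · by_cases hxa : x = a
      exacts [Or.inl hxa, Or.inr ((hmem x).2 ⟨hxa, hxU⟩)]

theorem card_filter_arrangements {U : Finset α} (hU : U.Nonempty) (P : List α → Prop)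
    [DecidablePred P] :
    #{L ∈ arrangements U | P L} = ∑ a ∈ U, #{M ∈ arrangements (U.erase a) | P (a :: M)} := by
  have hsplit : {L ∈ arrangements U | P L} = U.biUnion fun a =>
      {M ∈ arrangements (U.erase a) | P (a :: M)}.map ⟨List.cons a, List.cons_injective⟩ := by
    ext L
    cases L with
    | nil => simpa using fun h _ => nil_notMem_arrangements hU h
    | cons b M => simp [cons_mem_arrangements, and_assoc]
  rw [hsplit, card_biUnion]
  · simp only [card_map]
  · intro a _ b _ hab
    simp only [Function.onFun, disjoint_left, mem_map, Function.Embedding.coeFn_mk]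
    rintro _ ⟨M, -, rfl⟩ ⟨M', -, h⟩
    exact hab (List.cons_eq_cons.1 h).1.symm

theorem card_arrangements_findIdx_eq (p : α → Bool) (j : ℕ) (U : Finset α)
    (hU : ∃ x ∈ U, p x) :
    #{L ∈ arrangements U | L.findIdx p = j}
      = #{x ∈ U | p x} * (#{x ∈ U | ¬p x}).descFactorial j * (#U - j - 1).factorial := by
  obtain ⟨a, haU, hpa⟩ := hU
  induction j generalizing U with
  | zero =>
    have hsummand : ∀ b ∈ U, #{M ∈ arrangements (U.erase b) | (b :: M).findIdx p = 0}
        = if p b then (#U - 1).factorial else 0 := by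
      intro b hb
      by_cases hpb : p b <;> simp [List.findIdx_cons, hpb, card_arrangements, card_erase_of_mem hb]
    rw [card_filter_arrangements ⟨a, haU⟩, sum_congr rfl hsummand, ← sum_filter, sum_const,
      smul_eq_mul]
    simp
  | succ j ih =>
    have hsummand : ∀ b ∈ U, #{M ∈ arrangements (U.erase b) | (b :: M).findIdx p = j + 1}
        = if p b then 0 else #{x ∈ U | p x} * (#{x ∈ U | ¬p x} - 1).descFactorial j
            * (#U - (j + 1) - 1).factorial := by
      intro b hb
      by_cases hpb : p b
      · simp [List.findIdx_cons, hpb]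
      have hab : a ∈ U.erase b := mem_erase.2 ⟨ne_of_apply_ne p (by simp [hpa, hpb]), haU⟩
      simp only [List.findIdx_cons, hpb, cond_false, Nat.add_right_cancel_iff]
      rw [ih _ hab, filter_erase, filter_erase, erase_eq_of_notMem (by simp [hpb]),
        card_erase_of_mem (mem_filter.2 ⟨hb, hpb⟩), card_erase_of_mem hb]
      congr 2
      omega
    rw [card_filter_arrangements ⟨a, haU⟩, sum_congr rfl hsummand, sum_ite, sum_const_zero,
      zero_add, sum_const, smul_eq_mul]
    rcases hB : #{x ∈ U | ¬p x} with _ | c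
    · simp
    · rw [Nat.succ_descFactorial_succ, Nat.add_sub_cancel]
      ring

end Finset

theorem prod_Icc_one_sub_div_eq_descFactorial_div {m N : ℕ} (hmN : m ≤ N) :
    ∀ r ≤ N, ∏ j ∈ Finset.Icc 1 r, (1 - (m : ℚ) / ((N - j + 1 : ℕ) : ℚ))
      = ((N - m).descFactorial r : ℚ) / (N.descFactorial r : ℚ)
  | 0, _ => by simp
  | r + 1, hr => by
    rw [Finset.prod_Icc_succ_top (by omega), prod_Icc_one_sub_div_eq_descFactorial_div hmN r
      (by omega), Nat.descFactorial_succ, Nat.descFactorial_succ]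
    have hNr : (N.descFactorial r : ℚ) ≠ 0 := by
      exact_mod_cast (Nat.descFactorial_pos.2 (by omega)).ne'
    rcases le_or_gt r (N - m) with hrm | hrm
    · rw [show N - (r + 1) + 1 = N - r by omega]
      have : ((N - r : ℕ) : ℚ) ≠ 0 := by exact_mod_cast (show N - r ≠ 0 by omega)
      rw [show N - m - r = N - r - m by omega]
      push_cast [Nat.cast_sub (show m ≤ N - r by omega), Nat.cast_sub (show r ≤ N by omega)]
        at this ⊢
      field_simp
    · simp [Nat.descFactorial_eq_zero_iff_lt.2 hrm]

theorem descFactorial_mul_factorial_div_factorial {m N i : ℕ} (hmN : m ≤ N) (hi : 1 ≤ i)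
    (hiN : i ≤ N) :
    ((m * (N - m).descFactorial (i - 1) * (N - i).factorial : ℕ) : ℚ) / N.factorial
      = (m : ℚ) / ((N - i + 1 : ℕ) : ℚ) *
          ∏ j ∈ Finset.Icc 1 (i - 1), (1 - (m : ℚ) / ((N - j + 1 : ℕ) : ℚ)) := by
  rw [prod_Icc_one_sub_div_eq_descFactorial_div hmN _ (by omega),
    ← Nat.factorial_mul_descFactorial (show i - 1 ≤ N by omega),
    show N - (i - 1) = N - i + 1 by omega, Nat.factorial_succ]
  have : (N.descFactorial (i - 1) : ℚ) ≠ 0 := by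
    exact_mod_cast (Nat.descFactorial_pos.2 (by omega)).ne'
  push_cast
  field_simp

section Discovery

open Finset

variable {n k : ℕ}

theorem completeSeq_iff_mem_arrangements {Q : List (Finset (Fin n))} :
    CompleteSeq n k Q ↔ Q ∈ (univ.powersetCard k).arrangements := by
  simp [CompleteSeq, mem_arrangements]

theorem card_powersetCard_filter_subset (s : Finset (Fin n)) :
    #{q ∈ univ.powersetCard k | q ⊆ s} = (#s).choose k := by
  rw [← card_powersetCard]
  congr 1
  ext q
  simp [and_comm]

theorem ncard_completeSeq_tau_eq {t : ℕ} (hkt : k ≤ t) (s : Finset (Fin n)) (hs : #s = t)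
    {i : ℕ} (hi : 1 ≤ i) :
    {Q : List (Finset (Fin n)) | CompleteSeq n k Q ∧ tau n Q s = i}.ncard
      = t.choose k * (n.choose k - t.choose k).descFactorial (i - 1)
          * (n.choose k - i).factorial := by
  set U : Finset (Finset (Fin n)) := univ.powersetCard k
  have hset : {Q : List (Finset (Fin n)) | CompleteSeq n k Q ∧ tau n Q s = i}
      = ↑{L ∈ U.arrangements | L.findIdx (fun q => decide (q ⊆ s)) = i - 1} := by
    ext Q
    rw [Set.mem_ofPred_eq, mem_coe, mem_filter, completeSeq_iff_mem_arrangements, tau]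
    exact and_congr_right fun _ => by omega
  obtain ⟨q, hqs, hq⟩ := exists_subset_card_eq (hs ▸ hkt : k ≤ #s)
  have hUcard : #U = n.choose k := by simp [U]
  have hgood : #{q ∈ U | q ⊆ s} = t.choose k := hs ▸ card_powersetCard_filter_subset s
  have hbad : #{q ∈ U | ¬q ⊆ s} = n.choose k - t.choose k := by
    have := card_filter_add_card_filter_not (s := U) (fun q => q ⊆ s)
    omega
  rw [hset, Set.ncard_coe_finset, card_arrangements_findIdx_eq _ _ _
    ⟨q, by simpa [U] using hq, by simpa using hqs⟩]
  simp only [decide_eq_true_eq]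
  rw [hgood, hbad, hUcard, show n.choose k - (i - 1) - 1 = n.choose k - i by omega]

end Discovery

theorem count_complete_seqs_with_tau_general (n k t : ℕ) (hkt : k ≤ t) (htn : t ≤ n)
    (s : Finset (Fin n)) (hs : s.card = t) (i : ℕ) (hi1 : 1 ≤ i) :
    (i ≤ Nat.choose n k - Nat.choose t k + 1 →
      {Q : List (Finset (Fin n)) | CompleteSeq n k Q ∧ tau n Q s = i}.ncard
        = Nat.choose t k * Nat.factorial (Nat.choose n k - i) *
            ∏ j ∈ Finset.range (i - 1), (Nat.choose n k - Nat.choose t k - j)) ∧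
    (Nat.choose n k - Nat.choose t k + 1 < i →
      {Q : List (Finset (Fin n)) | CompleteSeq n k Q ∧ tau n Q s = i}.ncard = 0) ∧
    (i ≤ Nat.choose n k →
      ({Q : List (Finset (Fin n)) | CompleteSeq n k Q ∧ tau n Q s = i}.ncard : ℚ) /
          (Nat.factorial (Nat.choose n k) : ℚ)
        = ((Nat.choose t k : ℚ) / ((Nat.choose n k - i + 1 : ℕ) : ℚ)) *
            ∏ j ∈ Finset.Icc 1 (i - 1),
              (1 - (Nat.choose t k : ℚ) / ((Nat.choose n k - j + 1 : ℕ) : ℚ))) := by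
  rw [ncard_completeSeq_tau_eq hkt s hs hi1]
  refine ⟨fun _ => ?_, fun hi => ?_, fun hiN => ?_⟩
  · rw [Nat.descFactorial_eq_prod_range]
    ring
  · rw [Nat.descFactorial_eq_zero_iff_lt.2 (by omega), mul_zero, zero_mul]
  · exact descFactorial_mul_factorial_div_factorial (Nat.choose_le_choose k htn) hi1 hiN

/-- Fix a scene `s` with `|s| = t`, and set `m = C(t,k)`, `N = C(n,k)`.
For `1 ≤ i ≤ N - m + 1` the number of complete sequences `Q` with
`τ(Q,s) = i` equals `m · (N-i)! · (N-m)(N-m-1)⋯(N-m-i+2)` (a descending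
product of `i-1` factors); for `i > N - m + 1` it is `0`; and for
`1 ≤ i ≤ N` the fraction of the `N!` complete sequences with `τ(Q,s) = i`
equals `(m/(N-i+1)) · ∏_{j=1}^{i-1} (1 - m/(N-j+1))`. -/
theorem count_complete_seqs_with_tau (n k t : ℕ) (hk1 : 1 ≤ k) (hkt : k ≤ t) (htn : t ≤ n)
    (s : Finset (Fin n)) (hs : s.card = t) (i : ℕ) (hi1 : 1 ≤ i) :
    (i ≤ Nat.choose n k - Nat.choose t k + 1 →
      {Q : List (Finset (Fin n)) | CompleteSeq n k Q ∧ tau n Q s = i}.ncard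
        = Nat.choose t k * Nat.factorial (Nat.choose n k - i) *
            ∏ j ∈ Finset.range (i - 1), (Nat.choose n k - Nat.choose t k - j)) ∧
    (Nat.choose n k - Nat.choose t k + 1 < i →
      {Q : List (Finset (Fin n)) | CompleteSeq n k Q ∧ tau n Q s = i}.ncard = 0) ∧
    (i ≤ Nat.choose n k →
      ({Q : List (Finset (Fin n)) | CompleteSeq n k Q ∧ tau n Q s = i}.ncard : ℚ) /
          (Nat.factorial (Nat.choose n k) : ℚ)
        = ((Nat.choose t k : ℚ) / ((Nat.choose n k - i + 1 : ℕ) : ℚ)) *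
            ∏ j ∈ Finset.Icc 1 (i - 1),
              (1 - (Nat.choose t k : ℚ) / ((Nat.choose n k - j + 1 : ℕ) : ℚ))) :=
  count_complete_seqs_with_tau_general n k t hkt htn s hs i hi1
end

section
/- Let σ denote the average of T(Q) over all N! complete sequences Q. Then σ = (1/|S|) · Σ_{t=k}^{n} ( C(n,t) · Σ_{i=1}^{N} i · p_i(t) ), where p_i(t) = (C(t,k)/(N−i+1)) · ∏_{j=1}^{i−1} (1 − C(t,k)/(N−j+1)) (a rational number; note p_i(t) = 0 whenever i > N − C(t,k) + 1, since the product then contains a zero factor). -/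
/-- The finite set of all complete sequences (all orderings of the `N = C(n,k)`
queries). -/
noncomputable def completeSeqs (n k : ℕ) : Finset (List (Finset (Fin n))) :=
  ((Finset.powersetCard k (Finset.univ : Finset (Fin n))).toList.permutations).toFinset

/-- `p_i(t) = (C(t,k)/(N−i+1)) · ∏_{j=1}^{i−1} (1 − C(t,k)/(N−j+1))`, the
probability that a scene with `t` true stars is first discovered at query `i`
of a uniformly random complete sequence. -/
def pp (n k t i : ℕ) : ℚ :=
  ((Nat.choose t k : ℚ) / ((Nat.choose n k - i + 1 : ℕ) : ℚ)) *
    ∏ j ∈ Finset.Icc 1 (i - 1),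
      (1 - (Nat.choose t k : ℚ) / ((Nat.choose n k - j + 1 : ℕ) : ℚ))

/-!
Fix a scene `s` with `|s| = t`, and put `N = C(n,k)`, `m = C(t,k)`: exactly `m` of the `N`
queries discover `s`. Since some query does, `τ(Q,s) = #{i < N | q_1, …, q_i all miss s}`, and
the number of orderings whose first `i` queries all miss `s` is `(N-m)^(i) (N-i)!`, which is
`N!` times the survival product `∏_{j ≤ i} (1 - m/(N-j+1))`. On the other side, `p_i(t)` is the
difference of consecutive survival products, so summation by parts turns `Σ_i i p_i(t)` into the
sum of the survival products over `i < N`, which is the same quantity. Finally the summand only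
depends on `|s|`, and there are `C(n,t)` scenes of size `t`.
-/

open Finset
open scoped Nat List

section Permutations

variable {α : Type*} [DecidableEq α]

theorem List.countP_eq_card_filter_toFinset {l : List α} (hl : l.Nodup) (p : α → Bool) :
    l.countP p = #{x ∈ l.toFinset | p x} := by
  rw [List.countP_eq_length_filter, ← List.toFinset_card_of_nodup (hl.filter p),
    List.toFinset_filter]

theorem sum_permutations_toFinset_eq_sum_erase {M : Type*} [AddCommMonoid M] {l : List α}
    (hl : l ≠ []) (f : List α → M) :
    ∑ Q ∈ l.permutations.toFinset, f Q =
      ∑ x ∈ l.toFinset, ∑ v ∈ (l.erase x).permutations.toFinset, f (x :: v) := by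
  rw [sum_sigma']
  symm
  refine sum_bij (fun xv _ => xv.1 :: xv.2) ?_ ?_ ?_ (fun _ _ => rfl)
  · rintro ⟨x, v⟩ hxv
    simp only [mem_sigma, List.mem_toFinset, List.mem_permutations] at hxv ⊢
    exact List.cons_perm_iff_perm_erase.2 hxv
  · rintro ⟨x, v⟩ - ⟨y, w⟩ - h
    obtain ⟨rfl, rfl⟩ := List.cons_eq_cons.1 h
    rfl
  · rintro (_ | ⟨x, v⟩) hQ <;> simp only [List.mem_toFinset, List.mem_permutations] at hQ
    · exact absurd hQ.symm.eq_nil hl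
    · refine ⟨⟨x, v⟩, ?_, rfl⟩
      simpa only [mem_sigma, List.mem_toFinset, List.mem_permutations] using
        List.cons_perm_iff_perm_erase.1 hQ

theorem card_filter_le_findIdx_permutations (p : α → Bool) (i : ℕ) {l : List α}
    (hl : l.Nodup) :
    #{Q ∈ l.permutations.toFinset | i ≤ Q.findIdx p} =
      (l.countP (fun a => !p a)).descFactorial i * (l.length - i)! := by
  induction i generalizing l with
  | zero =>
    simp [List.toFinset_card_of_nodup (List.nodup_permutations l hl), List.length_permutations]
  | succ i ih =>
    rcases eq_or_ne l [] with rfl | hne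
    · simp
    have hterm : ∀ x ∈ l.toFinset,
        (∑ v ∈ (l.erase x).permutations.toFinset,
            if i + 1 ≤ (x :: v).findIdx p then 1 else 0) =
          if p x then 0
          else (l.countP (fun a => !p a) - 1).descFactorial i * (l.length - (i + 1))! := by
      intro x hx
      rw [List.mem_toFinset] at hx
      cases hpx : p x
      · have hc : l.countP (fun a => !p a) = (l.erase x).countP (fun a => !p a) + 1 := by
          rw [(List.perm_cons_erase hx).countP_eq, List.countP_cons, hpx]; rfl
        simp only [List.findIdx_cons, hpx, cond_false, Nat.add_le_add_iff_right,
          ← card_filter, ih (hl.erase x), List.length_erase_of_mem hx, Bool.false_eq_true,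
          if_false, hc, Nat.add_sub_cancel, Nat.sub_sub, Nat.add_comm 1 i]
      · simp [List.findIdx_cons, hpx]
    have hcard : #{x ∈ l.toFinset | ¬p x = true} = l.countP (fun a => !p a) := by
      simp [List.countP_eq_card_filter_toFinset hl]
    rw [card_filter, sum_permutations_toFinset_eq_sum_erase hne,
      sum_congr rfl hterm, sum_ite, sum_const_zero, zero_add,
      sum_const, smul_eq_mul, hcard, ← mul_assoc]
    cases l.countP (fun a => !p a) with
    | zero => simp
    | succ c => rw [Nat.add_sub_cancel, Nat.succ_descFactorial_succ]

end Permutations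

def missProb (N m i : ℕ) : ℚ :=
  ∏ j ∈ Icc 1 i, (1 - (m : ℚ) / ((N - j + 1 : ℕ) : ℚ))

def hitProb (N m i : ℕ) : ℚ :=
  (m : ℚ) / ((N - i + 1 : ℕ) : ℚ) * missProb N m (i - 1)

theorem missProb_succ (N m i : ℕ) :
    missProb N m (i + 1) = missProb N m i * (1 - (m : ℚ) / ((N - (i + 1) + 1 : ℕ) : ℚ)) :=
  prod_Icc_succ_top (by omega) _

theorem missProb_mul_descFactorial {N m : ℕ} (hmN : m ≤ N) {i : ℕ} (hiN : i ≤ N) :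
    missProb N m i * N.descFactorial i = (N - m).descFactorial i := by
  induction i with
  | zero => simp [missProb]
  | succ i ih =>
    have hNi : ((N - i : ℕ) : ℚ) = N - i := Nat.cast_sub (by omega)
    have hfactor : ((N - m).descFactorial i : ℚ) * (N - i - m) =
        (N - m).descFactorial i * ((N - m - i : ℕ) : ℚ) := by
      rcases le_or_gt i (N - m) with hi | hi
      · rw [Nat.sub_sub, Nat.cast_sub (by omega : m + i ≤ N)]
        push_cast
        ring
      · simp [Nat.descFactorial_of_lt hi]
    calc missProb N m (i + 1) * N.descFactorial (i + 1)
        = missProb N m i * N.descFactorial i * (N - i - m) := by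
          have hpos : (N : ℚ) - i ≠ 0 := by
            rw [← hNi]; exact_mod_cast (by omega : N - i ≠ 0)
          rw [missProb_succ, Nat.descFactorial_succ, show N - (i + 1) + 1 = N - i by omega, hNi]
          push_cast [hNi]
          field_simp
      _ = (N - m).descFactorial (i + 1) := by
          rw [ih (by omega), hfactor, Nat.descFactorial_succ]
          push_cast
          ring

theorem sum_Icc_mul_sub_eq {R : Type*} [CommRing R] (f : ℕ → R) (N : ℕ) :
    ∑ i ∈ Icc 1 N, (i : R) * (f (i - 1) - f i) = ∑ i ∈ range N, f i - N * f N := by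
  induction N with
  | zero => simp
  | succ N ih =>
    rw [sum_Icc_succ_top (by omega), ih, sum_range_succ, Nat.add_sub_cancel]
    push_cast
    ring

theorem hitProb_succ (N m i : ℕ) :
    hitProb N m (i + 1) = missProb N m i - missProb N m (i + 1) := by
  rw [hitProb, missProb_succ, Nat.add_sub_cancel]
  ring

theorem sum_Icc_mul_hitProb {N m : ℕ} (hm : 1 ≤ m) (hmN : m ≤ N) :
    ∑ i ∈ Icc 1 N, (i : ℚ) * hitProb N m i = ∑ i ∈ range N, missProb N m i := by
  have hhit : ∀ i ∈ Icc 1 N, hitProb N m i = missProb N m (i - 1) - missProb N m i := by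
    intro i hi
    obtain ⟨j, rfl⟩ : ∃ j, i = j + 1 := ⟨i - 1, by rw [mem_Icc] at hi; omega⟩
    rw [hitProb_succ, Nat.add_sub_cancel]
  have hlast : missProb N m N = 0 := by
    have h := missProb_mul_descFactorial hmN le_rfl
    rw [Nat.descFactorial_of_lt (n := N - m) (by omega), Nat.descFactorial_self] at h
    simpa [Nat.factorial_ne_zero] using h
  rw [sum_congr rfl fun i hi => by rw [hhit i hi], sum_Icc_mul_sub_eq, hlast, mul_zero,
    sub_zero]

theorem sum_tau_completeSeqs_eq_sum_descFactorial {n k : ℕ} {s : Finset (Fin n)}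
    (hs : k ≤ #s) :
    ∑ Q ∈ completeSeqs n k, tau n Q s =
      ∑ i ∈ range (n.choose k),
        (n.choose k - (#s).choose k).descFactorial i * (n.choose k - i)! := by
  set l := (powersetCard k (univ : Finset (Fin n))).toList
  set hit : Finset (Fin n) → Bool := fun q => decide (q ⊆ s)
  have hlen : l.length = n.choose k := by simp [l]
  have hmiss : l.countP (fun q => !hit q) = n.choose k - (#s).choose k := by
    have hgood : {q ∈ powersetCard k (univ : Finset (Fin n)) | q ⊆ s} = powersetCard k s := by
      ext q; simp [mem_powersetCard, and_comm]
    rw [List.countP_eq_card_filter_toFinset (nodup_toList _), toList_toFinset]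
    simp only [hit, Bool.not_eq_true', decide_eq_false_iff_not]
    rw [filter_not, card_sdiff_of_subset (filter_subset _ _), hgood]
    simp
  have htau : ∀ Q ∈ completeSeqs n k,
      tau n Q s = #{i ∈ range (n.choose k) | i ≤ Q.findIdx hit} := by
    intro Q hQ
    have hQ : Q ~ l := by simpa [completeSeqs] using hQ
    obtain ⟨q, hqs, hqk⟩ := exists_subset_card_eq hs
    have hlt : Q.findIdx hit < n.choose k := by
      rw [← hlen, ← hQ.length_eq]
      exact List.findIdx_lt_length_of_exists
        ⟨q, hQ.mem_iff.2 (by simp [l, hqk]), by simp [hit, hqs]⟩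
    change Q.findIdx hit + 1 = _
    rw [← Nat.card_Iic]
    congr 1
    ext i
    simp only [mem_filter, mem_range, mem_Iic]
    omega
  rw [sum_congr rfl htau]
  simp only [card_filter]
  rw [sum_comm]
  refine sum_congr rfl fun i _ => ?_
  rw [← card_filter, ← hmiss, ← hlen]
  exact card_filter_le_findIdx_permutations hit i (nodup_toList _)

theorem pp_eq_hitProb (n k t i : ℕ) : pp n k t i = hitProb (n.choose k) (t.choose k) i :=
  rfl

theorem sum_tau_completeSeqs_eq_factorial_mul {n k : ℕ} {s : Finset (Fin n)} (hs : k ≤ #s) :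
    ∑ Q ∈ completeSeqs n k, (tau n Q s : ℚ) =
      (n.choose k)! * ∑ i ∈ Icc 1 (n.choose k), (i : ℚ) * pp n k #s i := by
  have hm : 1 ≤ (#s).choose k := Nat.choose_pos hs
  have hmN : (#s).choose k ≤ n.choose k :=
    Nat.choose_le_choose k (by simpa using card_le_univ s)
  simp only [pp_eq_hitProb]
  rw [← Nat.cast_sum, sum_tau_completeSeqs_eq_sum_descFactorial hs, sum_Icc_mul_hitProb hm hmN,
    mul_sum]
  push_cast
  refine sum_congr rfl fun i hi => ?_
  rw [← missProb_mul_descFactorial hmN (mem_range.1 hi).le,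
    ← Nat.factorial_mul_descFactorial (mem_range.1 hi).le]
  push_cast
  ring

theorem sum_scenes_apply_card {M : Type*} [AddCommMonoid M] (n k : ℕ) (f : ℕ → M) :
    ∑ s ∈ scenes n k, f #s = ∑ t ∈ Icc k n, n.choose t • f t := by
  have hIcc : Icc k n = {t ∈ range (n + 1) | k ≤ t} := by
    ext t; simp only [mem_Icc, mem_filter, mem_range]; omega
  rw [scenes, sum_filter, ← powerset_univ,
    sum_powerset_apply_card (fun t => if k ≤ t then f t else 0), hIcc, sum_filter]
  simp

theorem average_T_eq_general (n k : ℕ) :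
    ((Nat.factorial (Nat.choose n k) : ℚ))⁻¹ * ∑ Q ∈ completeSeqs n k, T n k Q
      = ((scenes n k).card : ℚ)⁻¹ *
          ∑ t ∈ Finset.Icc k n, (Nat.choose n t : ℚ) *
            ∑ i ∈ Finset.Icc 1 (Nat.choose n k), (i : ℚ) * pp n k t i := by
  have hscene : ∀ s ∈ scenes n k,
      ((n.choose k)! : ℚ)⁻¹ * ∑ Q ∈ completeSeqs n k, (tau n Q s : ℚ) =
        ∑ i ∈ Icc 1 (n.choose k), (i : ℚ) * pp n k #s i := fun s hs => by
    rw [sum_tau_completeSeqs_eq_factorial_mul (mem_filter.1 hs).2, inv_mul_cancel_left₀]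
    exact_mod_cast Nat.factorial_ne_zero _
  calc ((n.choose k)! : ℚ)⁻¹ * ∑ Q ∈ completeSeqs n k, T n k Q
      = (#(scenes n k) : ℚ)⁻¹ * ∑ s ∈ scenes n k,
          ((n.choose k)! : ℚ)⁻¹ * ∑ Q ∈ completeSeqs n k, (tau n Q s : ℚ) := by
        simp only [T, mul_sum]
        rw [sum_comm]
        simp only [mul_left_comm]
    _ = _ := by
        rw [sum_congr rfl hscene, sum_scenes_apply_card n k
          fun t => ∑ i ∈ Icc 1 (n.choose k), (i : ℚ) * pp n k t i]
        simp only [nsmul_eq_mul]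

/-- The average `σ` of `T(Q)` over all `N!` complete sequences satisfies
`σ = (1/|S|) · Σ_{t=k}^{n} ( C(n,t) · Σ_{i=1}^{N} i · p_i(t) )`. -/
theorem average_T_eq (n k : ℕ) (hk1 : 1 ≤ k) (hkn : k ≤ n) :
    ((Nat.factorial (Nat.choose n k) : ℚ))⁻¹ * ∑ Q ∈ completeSeqs n k, T n k Q
      = ((scenes n k).card : ℚ)⁻¹ *
          ∑ t ∈ Finset.Icc k n, (Nat.choose n t : ℚ) *
            ∑ i ∈ Finset.Icc 1 (Nat.choose n k), (i : ℚ) * pp n k t i :=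
  average_T_eq_general n k
end

section
/- Let n ≥ 3. The map (dy, dz, x) ↦ {x, x + dy, x + dy + dz}, defined on the set of triples of natural numbers with dy ≥ 1, dz ≥ 1, x ≥ 0 and x + dy + dz ≤ n − 1, is a bijection onto the set of all 3-element subsets of {0, 1, …, n−1}. In particular, the pattern shifting algorithm of Mortari et al. generates every 3-element subset of the n spikes exactly once, producing a complete sequence of C(n,3) queries. -/
lemma tri_sorted (q : Finset ℕ) (h : q.card = 3) :
    ∃ a b c : ℕ, a < b ∧ b < c ∧ q = {a, b, c} := by
  rcases Finset.card_eq_three.mp h with ⟨a, b, c, hab, hac, hbc, rfl⟩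
  have perm : ∀ x y z : ℕ, ({x,y,z} : Finset ℕ) = {y,x,z} ∧ ({x,y,z} : Finset ℕ) = {x,z,y} := by
    intro x y z
    constructor <;> · ext t; simp; tauto
  rcases Nat.lt_trichotomy a b with h1 | h1 | h1
  · rcases Nat.lt_trichotomy b c with h2 | h2 | h2
    · exact ⟨a, b, c, h1, h2, rfl⟩
    · exact absurd h2 hbc
    · rcases Nat.lt_trichotomy a c with h3 | h3 | h3
      · exact ⟨a, c, b, h3, h2, (perm a b c).2⟩
      · exact absurd h3 hac
      · exact ⟨c, a, b, h3, h1, by ext t; simp; tauto⟩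
  · exact absurd h1 hab
  · rcases Nat.lt_trichotomy a c with h3 | h3 | h3
    · exact ⟨b, a, c, h1, h3, (perm a b c).1⟩
    · exact absurd h3 hac
    · rcases Nat.lt_trichotomy b c with h2 | h2 | h2
      · exact ⟨b, c, a, h2, h3, by ext t; simp; tauto⟩
      · exact absurd h2 hbc
      · exact ⟨c, b, a, h2, h1, by ext t; simp; tauto⟩

/-- The pattern shifting map `(dy, dz, x) ↦ {x, x+dy, x+dy+dz}`, defined on
triples with `dy ≥ 1`, `dz ≥ 1`, `x + dy + dz ≤ n - 1`, is a bijection onto the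
set of all 3-element subsets of `{0, …, n-1}`; in particular that domain (and
hence the complete sequence the algorithm generates) has exactly `C(n,3)`
elements. -/
theorem pattern_shifting_bijection (n : ℕ) (hn : 3 ≤ n) :
    Set.BijOn
      (fun p : ℕ × ℕ × ℕ => ({p.2.2, p.2.2 + p.1, p.2.2 + p.1 + p.2.1} : Finset ℕ))
      {p : ℕ × ℕ × ℕ | 1 ≤ p.1 ∧ 1 ≤ p.2.1 ∧ p.2.2 + p.1 + p.2.1 ≤ n - 1}
      {q : Finset ℕ | q.card = 3 ∧ q ⊆ Finset.range n} ∧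
    {p : ℕ × ℕ × ℕ | 1 ≤ p.1 ∧ 1 ≤ p.2.1 ∧ p.2.2 + p.1 + p.2.1 ≤ n - 1}.ncard
      = Nat.choose n 3 := by
  set f : ℕ × ℕ × ℕ → Finset ℕ :=
    fun p => ({p.2.2, p.2.2 + p.1, p.2.2 + p.1 + p.2.1} : Finset ℕ) with hf
  set D : Set (ℕ × ℕ × ℕ) :=
    {p : ℕ × ℕ × ℕ | 1 ≤ p.1 ∧ 1 ≤ p.2.1 ∧ p.2.2 + p.1 + p.2.1 ≤ n - 1} with hD
  set T : Set (Finset ℕ) := {q : Finset ℕ | q.card = 3 ∧ q ⊆ Finset.range n} with hT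
  have hmaps : Set.MapsTo f D T := by
    rintro ⟨dy, dz, x⟩ ⟨h1, h2, h3⟩
    dsimp only at h1 h2 h3
    constructor
    · have hx1 : x < x + dy := by omega
      have hx2 : x + dy < x + dy + dz := by omega
      rw [Finset.card_insert_of_notMem (by simp; omega),
        Finset.card_insert_of_notMem (by simp; omega), Finset.card_singleton]
    · intro t ht
      simp only [f, Finset.mem_insert, Finset.mem_singleton] at ht
      simp only [Finset.mem_range]
      omega
  have hinj : Set.InjOn f D := by
    rintro ⟨dy, dz, x⟩ ⟨h1, h2, h3⟩ ⟨dy', dz', x'⟩ ⟨h1', h2', h3'⟩ heq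
    dsimp only at h1 h2 h3 h1' h2' h3'
    simp only [f] at heq
    have m1 : x' ∈ ({x, x + dy, x + dy + dz} : Finset ℕ) := by rw [heq]; simp
    have m2 : x' + dy' ∈ ({x, x + dy, x + dy + dz} : Finset ℕ) := by rw [heq]; simp
    have m3 : x' + dy' + dz' ∈ ({x, x + dy, x + dy + dz} : Finset ℕ) := by rw [heq]; simp
    have m4 : x ∈ ({x', x' + dy', x' + dy' + dz'} : Finset ℕ) := by rw [← heq]; simp
    have m5 : x + dy ∈ ({x', x' + dy', x' + dy' + dz'} : Finset ℕ) := by rw [← heq]; simp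
    have m6 : x + dy + dz ∈ ({x', x' + dy', x' + dy' + dz'} : Finset ℕ) := by
      rw [← heq]; simp
    simp only [Finset.mem_insert, Finset.mem_singleton] at m1 m2 m3 m4 m5 m6
    have : dy = dy' ∧ dz = dz' ∧ x = x' := by omega
    obtain ⟨e1, e2, e3⟩ := this
    simp [e1, e2, e3]
  have hsurj : Set.SurjOn f D T := by
    rintro q ⟨hcard, hsub⟩
    obtain ⟨a, b, c, hab, hbc, rfl⟩ := tri_sorted q hcard
    have hc : c < n := by
      have : c ∈ Finset.range n := hsub (by simp)
      simpa using this
    refine ⟨(b - a, c - b, a), ?_, ?_⟩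
    · simp only [hD, Set.mem_setOf_eq]
      omega
    · simp only [f]
      have e1 : a + (b - a) = b := by omega
      rw [e1]
      have e2 : b + (c - b) = c := by omega
      rw [e2]
  have hbij : Set.BijOn f D T := ⟨hmaps, hinj, hsurj⟩
  refine ⟨hbij, ?_⟩
  have himg : f '' D = T := hbij.image_eq
  have h1 : D.ncard = T.ncard := by
    rw [← himg, Set.ncard_image_of_injOn hinj]
  rw [h1]
  have : T = ↑((Finset.range n).powersetCard 3) := by
    ext q
    simp [hT, Finset.mem_powersetCard, and_comm]
  rw [this, Set.ncard_coe_finset, Finset.card_powersetCard, Finset.card_range]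
end

section
/- For n = 5 and k = 3, the lexicographic sequence (listing all 3-element subsets of {0,1,2,3,4} in lexicographic order: {0,1,2}, {0,1,3}, {0,1,4}, {0,2,3}, {0,2,4}, {0,3,4}, {1,2,3}, {1,2,4}, {1,3,4}, {2,3,4}) has expected time to discovery T = 71/16, and this value is the maximum of T(Q) over all complete sequences Q. -/
set_option maxRecDepth 10000
set_option maxHeartbeats 1600000

/-- The lexicographic sequence of all 3-element subsets of `{0,1,2,3,4}`. -/
def lexQ : List (Finset (Fin 5)) :=
  [{0, 1, 2}, {0, 1, 3}, {0, 1, 4}, {0, 2, 3}, {0, 2, 4},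
   {0, 3, 4}, {1, 2, 3}, {1, 2, 4}, {1, 3, 4}, {2, 3, 4}]

namespace MaxTAux

/-- There are exactly 3 three-element subsets of `Fin 5` containing a fixed pair. -/
lemma count2 : ∀ P : Finset (Fin 5), P.card = 2 →
    (Finset.univ.filter fun q => q.card = 3 ∧ P ⊆ q).card = 3 := by decide

/-- There are exactly 6 three-element subsets of `Fin 5` containing a fixed point. -/
lemma count1 : ∀ P : Finset (Fin 5), P.card = 1 →
    (Finset.univ.filter fun q => q.card = 3 ∧ P ⊆ q).card = 6 := by decide

/-- Upper bound on the number of undiscovered scenes after `t` queries. -/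
def B : ℕ → ℕ
  | 0 => 16 | 1 => 12 | 2 => 10 | 3 => 9 | 4 => 7
  | 5 => 6 | 6 => 5 | 7 => 3 | 8 => 2 | 9 => 1 | _ => 0

lemma sum_B : ∑ t ∈ Finset.range 10, B t = 71 := by decide

lemma card_threes : (Finset.univ.filter fun q : Finset (Fin 5) => q.card = 3).card = 10 := by
  decide

lemma card_scenes : (scenes 5 3).card = 16 := by decide

theorem sum_tau_le (Q : List (Finset (Fin 5))) (hQ : CompleteSeq 5 3 Q) :
    ∑ s ∈ scenes 5 3, tau 5 Q s ≤ 71 := by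
  obtain ⟨hnd, hmemQ⟩ := hQ
  have hQfin : Q.toFinset = Finset.univ.filter fun q : Finset (Fin 5) => q.card = 3 := by
    ext q; simp [hmemQ q]
  have hlen : Q.length = 10 := by
    have h1 := List.toFinset_card_of_nodup hnd
    rw [hQfin, card_threes] at h1; omega
  have hgetD : ∀ j (hj : j < 10), Q.getD j ∅ = Q[j]'(by omega) := by
    intro j hj
    rw [List.getD_eq_getElem?_getD, List.getElem?_eq_getElem (show j < Q.length by omega)]
    rfl
  have hq3 : ∀ j, (hj : j < 10) → (Q.getD j ∅).card = 3 := by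
    intro j hj
    rw [hgetD j hj]
    exact (hmemQ _).1 (List.getElem_mem _)
  -- τ ≤ 10 on scenes
  have htau10 : ∀ s ∈ scenes 5 3, tau 5 Q s ≤ 10 := by
    intro s hs
    simp only [scenes, Finset.mem_filter, Finset.mem_univ, true_and] at hs
    obtain ⟨q, hqs, hq⟩ := Finset.exists_subset_card_eq hs
    have hlt : Q.findIdx (fun q => decide (q ⊆ s)) < Q.length :=
      List.findIdx_lt_length_of_exists ⟨q, (hmemQ q).2 hq, by simpa⟩
    unfold tau; omega
  -- exchange: Σ τ = Σ_t #{undiscovered after t}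
  have hexch : ∑ s ∈ scenes 5 3, tau 5 Q s
      = ∑ t ∈ Finset.range 10, ((scenes 5 3).filter fun s => t < tau 5 Q s).card := by
    have h1 : ∀ s ∈ scenes 5 3,
        tau 5 Q s = ∑ t ∈ Finset.range 10, if t < tau 5 Q s then 1 else 0 := by
      intro s hs
      rw [← Finset.card_filter]
      have : (Finset.range 10).filter (fun t => t < tau 5 Q s)
          = Finset.range (tau 5 Q s) := by
        ext t
        simp only [Finset.mem_filter, Finset.mem_range]
        have := htau10 s hs
        omega
      rw [this, Finset.card_range]
    rw [Finset.sum_congr rfl h1, Finset.sum_comm]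
    refine Finset.sum_congr rfl fun t _ => ?_
    rw [Finset.card_filter]
  rw [hexch]
  -- undiscovered condition
  have hcond : ∀ t ≤ 10, ∀ s : Finset (Fin 5),
      (t < tau 5 Q s ↔ ∀ j < t, ¬ Q.getD j ∅ ⊆ s) := by
    intro t ht s
    unfold tau
    constructor
    · intro h j hj
      have hj' : j < Q.findIdx (fun q => decide (q ⊆ s)) := by omega
      have := List.not_of_lt_findIdx hj'
      rw [hgetD j (by omega)]
      simpa using this
    · intro h
      by_contra hc
      push_neg at hc
      have hlt : Q.findIdx (fun q => decide (q ⊆ s)) < t := by omega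
      have hlt' : Q.findIdx (fun q => decide (q ⊆ s)) < Q.length := by omega
      have hp := List.findIdx_getElem (p := fun q => decide (q ⊆ s)) (xs := Q) (w := hlt')
      have := h _ hlt
      rw [hgetD _ (by omega)] at this
      simp at hp
      exact this hp
  -- per-t bound
  have hbd : ∀ t ∈ Finset.range 10,
      ((scenes 5 3).filter fun s => t < tau 5 Q s).card ≤ B t := by
    intro t ht
    simp only [Finset.mem_range] at ht
    rw [show ((scenes 5 3).filter fun s => t < tau 5 Q s)
        = (scenes 5 3).filter fun s => ∀ j < t, ¬ Q.getD j ∅ ⊆ s from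
      Finset.filter_congr fun s _ => by rw [hcond t (by omega) s]]
    rcases Nat.eq_zero_or_pos t with h0 | hpos
    · subst h0
      calc _ ≤ (scenes 5 3).card := Finset.card_filter_le _ _
        _ = 16 := card_scenes
        _ ≤ B 0 := by rfl
    -- t ≥ 1
    set P : Finset (Fin 5) := Finset.univ.filter fun a => ∀ j < t, a ∈ Q.getD j ∅ with hP
    set G : Finset (Finset (Fin 5)) := (Finset.range t).image (fun j => Q.getD j ∅) with hG
    have hGsub : G ⊆ Finset.univ.filter fun q : Finset (Fin 5) => q.card = 3 := by
      intro q hq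
      simp only [hG, Finset.mem_image, Finset.mem_range] at hq
      obtain ⟨j, hj, rfl⟩ := hq
      simp only [Finset.mem_filter]
      exact ⟨Finset.mem_univ _, hq3 j (by omega)⟩
    have hGcard : G.card = t := by
      rw [hG, Finset.card_image_of_injOn, Finset.card_range]
      intro i hi j hj hij
      simp only [Finset.coe_range, Set.mem_Iio] at hi hj
      have hij' : Q.getD i ∅ = Q.getD j ∅ := hij
      rw [hgetD i (by omega), hgetD j (by omega)] at hij'
      exact (hnd.getElem_inj_iff).1 hij' 
    -- generic counting bound on card P
    have hPbound : ∀ u, u ≤ P.card → ∀ c, (∀ P' : Finset (Fin 5), P'.card = u →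
        (Finset.univ.filter fun q => q.card = 3 ∧ P' ⊆ q).card = c) → t ≤ c := by
      intro u hu c hc
      obtain ⟨P', hP'sub, hP'card⟩ := Finset.exists_subset_card_eq hu
      have hGsub' : G ⊆ Finset.univ.filter fun q => q.card = 3 ∧ P' ⊆ q := by
        intro q hq
        simp only [hG, Finset.mem_image, Finset.mem_range] at hq
        obtain ⟨j, hj, rfl⟩ := hq
        simp only [Finset.mem_filter, Finset.mem_univ, true_and]
        refine ⟨hq3 j (by omega), fun a ha => ?_⟩
        have := hP'sub ha
        simp only [hP, Finset.mem_filter, Finset.mem_univ, true_and] at this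
        exact this j hj
      calc t = G.card := hGcard.symm
        _ ≤ _ := Finset.card_le_card hGsub'
        _ = c := hc P' hP'card
    -- card P bounds
    have hP3 : P.card ≤ 3 := by
      have : P ⊆ Q.getD 0 ∅ := by
        intro a ha
        simp only [hP, Finset.mem_filter, Finset.mem_univ, true_and] at ha
        exact ha 0 hpos
      calc P.card ≤ (Q.getD 0 ∅).card := Finset.card_le_card this
        _ = 3 := hq3 0 (by omega)
    have hP2 : 2 ≤ t → P.card ≤ 2 := by
      intro h2
      by_contra hc
      push_neg at hc
      have hsub : ∀ j < t, P ⊆ Q.getD j ∅ := by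
        intro j hj a ha
        simp only [hP, Finset.mem_filter, Finset.mem_univ, true_and] at ha
        exact ha j hj
      have he : ∀ j < t, Q.getD j ∅ = P := by
        intro j hj
        exact (Finset.eq_of_subset_of_card_le (hsub j hj)
          (by rw [hq3 j (by omega)]; omega)).symm
      have h01 : Q.getD 0 ∅ = Q.getD 1 ∅ := by rw [he 0 (by omega), he 1 (by omega)]
      rw [hgetD 0 (by omega), hgetD 1 (by omega)] at h01
      have := (hnd.getElem_inj_iff).1 h01
      omega
    have hP1 : 4 ≤ t → P.card ≤ 1 := by
      intro h4
      by_contra hc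
      push_neg at hc
      have := hPbound 2 (by omega) 3 count2
      omega
    have hP0 : 7 ≤ t → P.card = 0 := by
      intro h7
      by_contra hc
      have := hPbound 1 (by omega) 6 count1
      omega
    -- union bound
    have hsubU : ((scenes 5 3).filter fun s => ∀ j < t, ¬ Q.getD j ∅ ⊆ s)
        ⊆ ((Finset.univ.filter fun q : Finset (Fin 5) => q.card = 3) \ G)
          ∪ P.image (fun a => {a}ᶜ) := by
      intro s hs
      simp only [Finset.mem_filter, scenes, Finset.mem_univ, true_and] at hs
      obtain ⟨hs3, hsnd⟩ := hs
      have hs5 : s.card ≤ 5 := by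
        have := Finset.card_le_univ s
        simpa using this
      rcases show s.card = 3 ∨ s.card = 4 ∨ s.card = 5 by omega with h | h | h
      · refine Finset.mem_union_left _ ?_
        rw [Finset.mem_sdiff]
        refine ⟨by simp [h], fun hsG => ?_⟩
        simp only [hG, Finset.mem_image, Finset.mem_range] at hsG
        obtain ⟨j, hj, hjs⟩ := hsG
        exact hsnd j hj (hjs ▸ subset_rfl)
      · refine Finset.mem_union_right _ ?_
        have hcc : sᶜ.card = 1 := by
          rw [Finset.card_compl, h]; rfl
        obtain ⟨a, ha⟩ := Finset.card_eq_one.1 hcc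
        have hseq : s = {a}ᶜ := by rw [← ha, compl_compl]
        refine Finset.mem_image.2 ⟨a, ?_, hseq.symm⟩
        simp only [hP, Finset.mem_filter, Finset.mem_univ, true_and]
        intro j hj
        by_contra haq
        refine hsnd j hj fun x hx => ?_
        rw [hseq, Finset.mem_compl, Finset.mem_singleton]
        rintro rfl
        exact haq hx
      · exfalso
        have : s = Finset.univ := (Finset.card_eq_iff_eq_univ s).1 (by simpa using h)
        exact hsnd 0 hpos (this ▸ Finset.subset_univ _)
    have hcardle : ((scenes 5 3).filter fun s => ∀ j < t, ¬ Q.getD j ∅ ⊆ s).card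
        ≤ (10 - t) + P.card := by
      have h1 : ((Finset.univ.filter fun q : Finset (Fin 5) => q.card = 3) \ G).card
          = 10 - t := by
        rw [Finset.card_sdiff_of_subset hGsub, card_threes, hGcard]
      have h2 : (P.image (fun a : Fin 5 => ({a}ᶜ : Finset (Fin 5)))).card ≤ P.card :=
        Finset.card_image_le
      have h3 := Finset.card_le_card hsubU
      have h4 := Finset.card_union_le
        ((Finset.univ.filter fun q : Finset (Fin 5) => q.card = 3) \ G)
        (P.image (fun a : Fin 5 => ({a}ᶜ : Finset (Fin 5))))
      omega
    -- conclude per value of t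
    interval_cases t
    · have hB : B 1 = 12 := rfl; omega
    · have hB : B 2 = 10 := rfl; have := hP2 (by omega); omega
    · have hB : B 3 = 9 := rfl; have := hP2 (by omega); omega
    · have hB : B 4 = 7 := rfl; have := hP1 (by omega); omega
    · have hB : B 5 = 6 := rfl; have := hP1 (by omega); omega
    · have hB : B 6 = 5 := rfl; have := hP1 (by omega); omega
    · have hB : B 7 = 3 := rfl; have := hP0 (by omega); omega
    · have hB : B 8 = 2 := rfl; have := hP0 (by omega); omega
    · have hB : B 9 = 1 := rfl; have := hP0 (by omega); omega
  calc ∑ t ∈ Finset.range 10, ((scenes 5 3).filter fun s => t < tau 5 Q s).card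
      ≤ ∑ t ∈ Finset.range 10, B t := Finset.sum_le_sum hbd
    _ = 71 := sum_B

end MaxTAux

/-- For `n = 5`, `k = 3`, the lexicographic sequence has expected time to
discovery `71/16`, which is the maximum of `T` over all complete sequences. -/
theorem max_T_eq :
    CompleteSeq 5 3 lexQ ∧ T 5 3 lexQ = 71 / 16 ∧
    ∀ Q : List (Finset (Fin 5)), CompleteSeq 5 3 Q → T 5 3 Q ≤ 71 / 16 := by
  refine ⟨⟨by decide, by decide⟩, ?_, ?_⟩
  · have h2 : ∑ s ∈ scenes 5 3, tau 5 lexQ s = 71 := by decide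
    have h3 : (∑ s ∈ scenes 5 3, (tau 5 lexQ s : ℚ)) = 71 := by
      rw [← Nat.cast_sum, h2]
      norm_num
    rw [T, MaxTAux.card_scenes, h3]
    norm_num
  · intro Q hQ
    have hb := MaxTAux.sum_tau_le Q hQ
    have h3 : (∑ s ∈ scenes 5 3, (tau 5 Q s : ℚ)) ≤ 71 := by
      rw [← Nat.cast_sum]; exact_mod_cast hb
    rw [T, MaxTAux.card_scenes]
    calc (16 : ℚ)⁻¹ * ∑ s ∈ scenes 5 3, (tau 5 Q s : ℚ)
        ≤ (16 : ℚ)⁻¹ * 71 := by gcongr <;> norm_num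
      _ = 71 / 16 := by norm_num
end
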